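/- Let Ω ⊆ ℝⁿ (n ≥ 2) be open, let p : closure(Ω) → [1,∞) be log-Hölder continuous with p⁺ < n, let r : Ω → ℝ be bounded, and let a ∈ L^∞(Ω) with a ≥ 0. Define Φ and Ψ as in the context and assume the embedding hypothesis. If r(x) ≥ 0 for at least one x ∈ Ω (equivalently: either r ≥ 0 everywhere on Ω, or r attains both negative and nonnegative values on Ω), then Ω satisfies the log-measure density condition: there exist constants c > 0 and α > 0 such that |B_R(x) ∩ Ω| ≥ c Rⁿ (log(1/R))^{−α} for every x ∈ closure(Ω) and every R ∈ (0, 1/2]. -/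

import Mathlib

open MeasureTheory Set
open scoped ENNReal

/-- The function `Φ(x,t) = t^{p(x)} + a(x) t^{p(x)} (log(e+t))^{r(x)}`. -/
noncomputable def Phi2 {n : ℕ} (p r a : EuclideanSpace ℝ (Fin n) → ℝ)
    (x : EuclideanSpace ℝ (Fin n)) (t : ℝ) : ℝ :=
  t ^ p x + a x * t ^ p x * (Real.log (Real.exp 1 + t)) ^ r x

/-- The Sobolev conjugate exponent `p*(x) = (1/p(x) − 1/n)⁻¹`. -/
noncomputable def pStar (n : ℕ) (p : EuclideanSpace ℝ (Fin n) → ℝ)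
    (x : EuclideanSpace ℝ (Fin n)) : ℝ :=
  (1 / p x - 1 / (n : ℝ))⁻¹

/-- The function
`Ψ(x,t) = t^{p*(x)} + a(x)^{p*(x)/p(x)} t^{p*(x)}
  (log(e + t/a(x)^{(p(x)−1)/p(x)}))^{r(x)p*(x)/p(x)}`
(with the second term equal to `0` when `a(x) = 0`, as `0^{p*/p} = 0`). -/
noncomputable def Psi {n : ℕ} (p r a : EuclideanSpace ℝ (Fin n) → ℝ)
    (x : EuclideanSpace ℝ (Fin n)) (t : ℝ) : ℝ :=
  t ^ pStar n p x + a x ^ (pStar n p x / p x) * t ^ pStar n p x *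
    (Real.log (Real.exp 1 + t / a x ^ ((p x - 1) / p x))) ^ (r x * pStar n p x / p x)

/-- The Luxemburg (quasi-)norm `‖u‖_{L^Φ(Ω)} = inf{λ > 0 : ∫_Ω Φ(x,|u(x)|/λ) dx ≤ 1}`,
valued in `ℝ≥0∞`, with `inf ∅ = ∞`. -/
noncomputable def luxNorm {n : ℕ} (Ω : Set (EuclideanSpace ℝ (Fin n)))
    (Φ : EuclideanSpace ℝ (Fin n) → ℝ → ℝ)
    (u : EuclideanSpace ℝ (Fin n) → ℝ) : ℝ≥0∞ :=
  sInf ((fun l : ℝ => ENNReal.ofReal l) ''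
    {l : ℝ | 0 < l ∧ (∫⁻ x in Ω, ENNReal.ofReal (Φ x (|u x| / l))) ≤ 1})

/-! Test the Sobolev embedding on bumps adapted to balls `B_ρ(x)`, `x ∈ Ω`. Since `p` is
log-Hölder, on `B_ρ(x)` the variable exponents may be frozen at `p(x) ± O(1 / log (1/ρ))` at the
cost of a bounded factor `ρ^{-O(1/log (1/ρ))}`, and the embedding gives
`|B_{ρ/2}(x) ∩ Ω| ≲ ρ^{-s} (|B_ρ(x) ∩ Ω| (log (1/ρ))^{sup r})^{s/q}` with `s/q > 1`, because the
Sobolev exponent `p*` exceeds `p`.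
Consequently, once `|B_ρ(x) ∩ Ω| ≤ ε₀ ρⁿ (log (1/ρ))^{-α}` at a small radius, the same bound holds
at all radii `ρ/2^k`, which is impossible at an interior point. The bound then extends to points
of the closure and to all radii `R ≤ 1/2` at the cost of a constant. -/

open Metric Filter Topology

lemma one_le_log_exp_one_add {t : ℝ} (ht : 0 ≤ t) : 1 ≤ Real.log (Real.exp 1 + t) :=
  (Real.le_log_iff_exp_le (by positivity)).2 (by linarith)

section LogHolder

variable {X : Type*} [MetricSpace X]

def IsLogHolderOn (p : X → ℝ) (S : Set X) (C : ℝ) : Prop :=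
  ∀ x ∈ S, ∀ y ∈ S, x ≠ y → |p x - p y| ≤ C / Real.log (Real.exp 1 + 1 / dist x y)

variable {p : X → ℝ} {S : Set X} {C : ℝ} {x y : X}

lemma IsLogHolderOn.mono {T : Set X} (h : IsLogHolderOn p S C) (hT : T ⊆ S) :
    IsLogHolderOn p T C :=
  fun x hx y hy hxy => h x (hT hx) y (hT hy) hxy

lemma IsLogHolderOn.abs_sub_le (h : IsLogHolderOn p S C) (hC : 0 ≤ C) (hx : x ∈ S)
    (hy : y ∈ S) : |p x - p y| ≤ C := by
  rcases eq_or_ne x y with rfl | hxy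
  · simpa using hC
  calc |p x - p y| ≤ C / Real.log (Real.exp 1 + 1 / dist x y) := h x hx y hy hxy
    _ ≤ C / 1 := div_le_div_of_nonneg_left hC one_pos (one_le_log_exp_one_add (by positivity))
    _ = C := div_one C

lemma IsLogHolderOn.bddAbove_image (h : IsLogHolderOn p S C) (hC : 0 ≤ C) (hx : x ∈ S) :
    BddAbove (p '' S) :=
  ⟨p x + C, by
    rintro _ ⟨y, hy, rfl⟩
    linarith [(abs_le.1 (h.abs_sub_le hC hy hx)).2]⟩

lemma IsLogHolderOn.abs_sub_le_div_log (h : IsLogHolderOn p S C) (hC : 0 ≤ C) (hx : x ∈ S)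
    (hy : y ∈ S) {ρ : ℝ} (hρ0 : 0 < ρ) (hρ1 : ρ < 1) (hxy : dist x y ≤ ρ) :
    |p x - p y| ≤ C / Real.log (1 / ρ) := by
  have hL : 0 < Real.log (1 / ρ) := Real.log_pos (by rw [lt_div_iff₀ hρ0]; linarith)
  rcases eq_or_ne x y with rfl | hne
  · simpa using div_nonneg hC hL.le
  refine (h x hx y hy hne).trans (div_le_div_of_nonneg_left hC hL ?_)
  refine Real.log_le_log (by positivity) ?_
  have : 1 / ρ ≤ 1 / dist x y := one_div_le_one_div_of_le (dist_pos.2 hne) hxy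
  linarith [Real.exp_pos 1]

end LogHolder

section LogDensity

noncomputable def logDensity (d α ρ : ℝ) : ℝ := ρ ^ d * Real.log (1 / ρ) ^ (-α)

variable {d α : ℝ}

lemma logDensity_nonneg {ρ : ℝ} (hρ : 0 < ρ) (hρ1 : ρ ≤ 1) : 0 ≤ logDensity d α ρ :=
  mul_nonneg (Real.rpow_nonneg hρ.le d)
    (Real.rpow_nonneg (Real.log_nonneg (by rw [le_div_iff₀ hρ]; linarith)) _)

lemma rpow_mul_logDensity_le (hα : 0 ≤ α) {κ R K : ℝ} (hκ0 : 0 < κ)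
    (hκ1 : κ ≤ 1) (hR0 : 0 < R) (hR : R ≤ 1 / 2)
    (hK : 1 + Real.log (1 / κ) / Real.log 2 ≤ K) :
    K ^ (-α) * κ ^ d * logDensity d α R ≤ logDensity d α (κ * R) := by
  have hlog2 : 0 < Real.log 2 := Real.log_pos one_lt_two
  have hL2 : Real.log 2 ≤ Real.log (1 / R) :=
    Real.log_le_log two_pos (by rw [le_div_iff₀ hR0]; linarith)
  have hLκ : 0 ≤ Real.log (1 / κ) := Real.log_nonneg (by rw [le_div_iff₀ hκ0]; linarith)
  have hK1 : 1 ≤ K := le_trans (le_add_of_nonneg_right (by positivity)) hK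
  have hlog : Real.log (1 / (κ * R)) ≤ K * Real.log (1 / R) := by
    have hsplit : Real.log (1 / (κ * R)) = Real.log (1 / κ) + Real.log (1 / R) := by
      rw [← one_div_mul_one_div, Real.log_mul (by positivity) (by positivity)]
    have : Real.log (1 / κ) ≤ Real.log (1 / κ) / Real.log 2 * Real.log (1 / R) := by
      rw [div_mul_eq_mul_div, le_div_iff₀ hlog2]
      exact mul_le_mul_of_nonneg_left hL2 hLκ
    nlinarith
  have hLκR : 0 < Real.log (1 / (κ * R)) := Real.log_pos (by
    rw [lt_div_iff₀ (by positivity)]; nlinarith)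
  unfold logDensity
  calc K ^ (-α) * κ ^ d * (R ^ d * Real.log (1 / R) ^ (-α))
      = (κ * R) ^ d * (K * Real.log (1 / R)) ^ (-α) := by
        rw [Real.mul_rpow hκ0.le hR0.le, Real.mul_rpow (by linarith) (by linarith)]; ring
    _ ≤ (κ * R) ^ d * Real.log (1 / (κ * R)) ^ (-α) :=
        mul_le_mul_of_nonneg_left (Real.rpow_le_rpow_of_nonpos hLκR hlog (by linarith))
          (by positivity)

lemma logDensity_le_one (hd : 0 ≤ d) (hα : 0 ≤ α) {ρ : ℝ} (hρ0 : 0 < ρ) (hρ1 : ρ ≤ 1)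
    (hL : 1 ≤ Real.log (1 / ρ)) : logDensity d α ρ ≤ 1 :=
  mul_le_one₀ (Real.rpow_le_one hρ0.le hρ1 hd) (Real.rpow_nonneg (by linarith) _)
    (Real.rpow_le_one_of_one_le_of_nonpos hL (by linarith))

lemma rpow_mul_logDensity_le_half (hα : 0 ≤ α) {ρ : ℝ} (hρ0 : 0 < ρ) (hρ : ρ ≤ 1 / 2) :
    2 ^ (-α) * (1 / 2) ^ d * logDensity d α ρ ≤ logDensity d α (ρ / 2) := by
  rw [show ρ / 2 = 1 / 2 * ρ by ring]
  exact rpow_mul_logDensity_le hα (by norm_num) (by norm_num) hρ0 hρ (by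
    rw [one_div_one_div, div_self (Real.log_pos one_lt_two).ne']; norm_num)

lemma mul_mul_rpow_le_of_le_logDensity {rp D m ρ : ℝ} (hD : 0 < D)
    (hL : 0 < Real.log (1 / ρ)) (hm : m ≤ D⁻¹ * logDensity d α ρ) :
    D * m * Real.log (1 / ρ) ^ rp ≤ ρ ^ d * Real.log (1 / ρ) ^ (rp - α) := by
  calc D * m * Real.log (1 / ρ) ^ rp
      ≤ D * (D⁻¹ * logDensity d α ρ) * Real.log (1 / ρ) ^ rp := by gcongr
    _ = ρ ^ d * Real.log (1 / ρ) ^ (rp - α) := by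
      rw [logDensity, Real.rpow_sub hL, Real.rpow_neg hL.le]
      field_simp

lemma rpow_add_one_eq_mul_logDensity {ρ : ℝ} (hρ0 : 0 < ρ) (hL : 0 < Real.log (1 / ρ)) :
    ρ ^ (d + 1) = Real.log (1 / ρ) ^ α * Real.exp (-1 * Real.log (1 / ρ)) * logDensity d α ρ := by
  have hexp : Real.exp (-1 * Real.log (1 / ρ)) = ρ := by
    rw [neg_one_mul, one_div, Real.log_inv, neg_neg, Real.exp_log hρ0]
  rw [hexp, Real.rpow_add_one hρ0.ne', logDensity, Real.rpow_neg hL.le]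
  field_simp

end LogDensity

section Bump

variable {n : ℕ}

/-- `rOut = 3/4 < 1`, so that the dilated bumps `ballBump x ρ` and their gradients vanish
outside the open ball `B_ρ(x)`. -/
noncomputable def unitBump (n : ℕ) : ContDiffBump (0 : EuclideanSpace ℝ (Fin n)) :=
  ⟨1 / 2, 3 / 4, by norm_num, by norm_num⟩

noncomputable def ballBump (x : EuclideanSpace ℝ (Fin n)) (ρ : ℝ)
    (y : EuclideanSpace ℝ (Fin n)) : ℝ :=
  unitBump n (ρ⁻¹ • (y - x))

variable {x y : EuclideanSpace ℝ (Fin n)} {ρ : ℝ}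

lemma contDiff_ballBump : ContDiff ℝ 1 (ballBump x ρ) :=
  (unitBump n).contDiff.comp ((contDiff_id.sub contDiff_const).const_smul ρ⁻¹)

lemma ballBump_nonneg : 0 ≤ ballBump x ρ y := (unitBump n).nonneg

lemma ballBump_le_one : ballBump x ρ y ≤ 1 := (unitBump n).le_one

lemma norm_inv_smul_sub (hρ : 0 < ρ) : ‖ρ⁻¹ • (y - x)‖ = dist y x / ρ := by
  rw [norm_smul, Real.norm_eq_abs, abs_inv, abs_of_pos hρ, dist_eq_norm, inv_mul_eq_div]

lemma ballBump_eq_one (hρ : 0 < ρ) (hy : y ∈ closedBall x (ρ / 2)) : ballBump x ρ y = 1 := by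
  refine (unitBump n).one_of_mem_closedBall ?_
  rw [mem_closedBall, dist_zero_right, norm_inv_smul_sub hρ, div_le_iff₀ hρ]
  show dist y x ≤ 1 / 2 * ρ
  linarith [mem_closedBall.1 hy]

lemma tsupport_ballBump_subset (hρ : 0 < ρ) :
    tsupport (ballBump x ρ) ⊆ closedBall x (3 / 4 * ρ) := by
  refine closure_minimal (fun y hy => ?_) isClosed_closedBall
  have : ρ⁻¹ • (y - x) ∈ ball 0 (3 / 4) := (unitBump n).support_eq ▸ hy
  rw [mem_ball, dist_zero_right, norm_inv_smul_sub hρ, div_lt_iff₀ hρ] at this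
  exact mem_closedBall.2 this.le

lemma ballBump_eq_zero (hρ : 0 < ρ) (hy : y ∉ ball x ρ) : ballBump x ρ y = 0 :=
  image_eq_zero_of_notMem_tsupport fun h => hy <|
    closedBall_subset_ball (by linarith) (tsupport_ballBump_subset hρ h)

lemma fderiv_ballBump_eq_zero (hρ : 0 < ρ) (hy : y ∉ ball x ρ) : fderiv ℝ (ballBump x ρ) y = 0 :=
  fderiv_of_notMem_tsupport ℝ fun h => hy <|
    closedBall_subset_ball (by linarith) (tsupport_ballBump_subset hρ h)

lemma hasCompactSupport_ballBump (hρ : 0 < ρ) : HasCompactSupport (ballBump x ρ) :=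
  HasCompactSupport.intro (isCompact_closedBall x ρ) fun _ hy =>
    ballBump_eq_zero hρ fun h => hy (ball_subset_closedBall h)

lemma norm_fderiv_ballBump_le (hρ : 0 < ρ) {M : ℝ}
    (hM : ∀ z, ‖fderiv ℝ (unitBump n) z‖ ≤ M) : ‖fderiv ℝ (ballBump x ρ) y‖ ≤ M / ρ := by
  have hscale : HasFDerivAt (fun z : EuclideanSpace ℝ (Fin n) => ρ⁻¹ • (z - x))
      (ρ⁻¹ • ContinuousLinearMap.id ℝ _) y := ((hasFDerivAt_id y).sub_const x).const_smul ρ⁻¹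
  have hderiv := (((unitBump n).contDiff (n := 1)).differentiable one_ne_zero
    (ρ⁻¹ • (y - x))).hasFDerivAt.comp y hscale
  rw [show ballBump x ρ = (unitBump n ∘ fun z => ρ⁻¹ • (z - x)) from rfl, hderiv.fderiv,
    ContinuousLinearMap.comp_smul, ContinuousLinearMap.comp_id, norm_smul, Real.norm_eq_abs, abs_inv, abs_of_pos hρ,
    inv_mul_eq_div]
  exact div_le_div_of_nonneg_right (hM _) hρ.le

lemma exists_norm_fderiv_unitBump_le (n : ℕ) :
    ∃ M, 1 ≤ M ∧ ∀ z, ‖fderiv ℝ (unitBump n) z‖ ≤ M := by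
  have hcont := ((unitBump n).contDiff (n := 1)).continuous_fderiv one_ne_zero
  obtain ⟨M, hM⟩ := hcont.bounded_above_of_compact_support ((unitBump n).hasCompactSupport.fderiv ℝ)
  exact ⟨max M 1, le_max_right M 1, fun z => (hM z).trans (le_max_left M 1)⟩

end Bump

section Modular

variable {n : ℕ} {Ω S : Set (EuclideanSpace ℝ (Fin n))}

lemma luxNorm_le_ofReal {Φ : EuclideanSpace ℝ (Fin n) → ℝ → ℝ} {u : EuclideanSpace ℝ (Fin n) → ℝ}
    {l : ℝ} (hl : 0 < l) (h : ∫⁻ x in Ω, ENNReal.ofReal (Φ x (|u x| / l)) ≤ 1) :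
    luxNorm Ω Φ u ≤ ENNReal.ofReal l :=
  sInf_le (mem_image_of_mem _ ⟨hl, h⟩)

lemma ofReal_le_luxNorm {Φ : EuclideanSpace ℝ (Fin n) → ℝ → ℝ} {u : EuclideanSpace ℝ (Fin n) → ℝ}
    {l₀ : ℝ} (h : ∀ l, 0 < l → ∫⁻ x in Ω, ENNReal.ofReal (Φ x (|u x| / l)) ≤ 1 → l₀ ≤ l) :
    ENNReal.ofReal l₀ ≤ luxNorm Ω Φ u :=
  le_sInf fun _ ⟨l, ⟨hl, hint⟩, hz⟩ => hz ▸ ENNReal.ofReal_le_ofReal (h l hl hint)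

variable {p r a : EuclideanSpace ℝ (Fin n) → ℝ} {y : EuclideanSpace ℝ (Fin n)}

lemma Phi2_zero (hp : 1 ≤ p y) : Phi2 p r a y 0 = 0 := by
  simp [Phi2, Real.zero_rpow (by linarith : p y ≠ 0)]

lemma Phi2_le {q A rp t T : ℝ} (hp : 1 ≤ p y) (hpq : p y ≤ q) (ha : 0 ≤ a y) (haA : a y ≤ A)
    (hr : r y ≤ rp) (hrp : 0 ≤ rp) (ht : 0 ≤ t) (htT : t ≤ T) (hT : 1 ≤ T) :
    Phi2 p r a y t ≤ (1 + A) * T ^ q * Real.log (Real.exp 1 + T) ^ rp := by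
  have hpow : t ^ p y ≤ T ^ q := by
    rcases le_total t 1 with h | h
    · exact (Real.rpow_le_one ht h (by linarith)).trans (Real.one_le_rpow hT (by linarith))
    · exact (Real.rpow_le_rpow ht htT (by linarith)).trans
        (Real.rpow_le_rpow_of_exponent_le hT hpq)
  have hlogT : 1 ≤ Real.log (Real.exp 1 + T) := one_le_log_exp_one_add (by linarith)
  have hlog : Real.log (Real.exp 1 + t) ^ r y ≤ Real.log (Real.exp 1 + T) ^ rp := by
    have hlogt := one_le_log_exp_one_add ht
    rcases le_total (r y) 0 with h | h
    · exact (Real.rpow_le_one_of_one_le_of_nonpos hlogt h).trans (Real.one_le_rpow hlogT hrp)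
    · exact (Real.rpow_le_rpow (by linarith) (Real.log_le_log (by positivity) (by linarith))
        h).trans (Real.rpow_le_rpow_of_exponent_le hlogT hr)
  have hΛ : 1 ≤ Real.log (Real.exp 1 + T) ^ rp := Real.one_le_rpow hlogT hrp
  have hTq : 0 ≤ T ^ q := Real.rpow_nonneg (by linarith) q
  have hprod : t ^ p y * Real.log (Real.exp 1 + t) ^ r y ≤
      T ^ q * Real.log (Real.exp 1 + T) ^ rp :=
    mul_le_mul hpow hlog (Real.rpow_nonneg (by linarith [one_le_log_exp_one_add ht]) _) hTq
  have hsecond := mul_le_mul haA hprod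
    (mul_nonneg (Real.rpow_nonneg ht _)
      (Real.rpow_nonneg (by linarith [one_le_log_exp_one_add ht]) _))
    (ha.trans haA)
  unfold Phi2
  nlinarith [mul_le_mul_of_nonneg_left hΛ hTq]

lemma rpow_pStar_le_Psi {t : ℝ} (ha : 0 ≤ a y) (ht : 0 ≤ t) : t ^ pStar n p y ≤ Psi p r a y t := by
  have hlog := one_le_log_exp_one_add (div_nonneg ht (Real.rpow_nonneg ha ((p y - 1) / p y)))
  unfold Psi
  have : 0 ≤ a y ^ (pStar n p y / p y) * t ^ pStar n p y *
      Real.log (Real.exp 1 + t / a y ^ ((p y - 1) / p y)) ^ (r y * pStar n p y / p y) := by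
    have := Real.rpow_nonneg ha (pStar n p y / p y)
    have := Real.rpow_nonneg ht (pStar n p y)
    have := Real.rpow_nonneg (zero_le_one.trans hlog) (r y * pStar n p y / p y)
    positivity
  linarith

lemma lintegral_Phi2_le (hΩ : MeasurableSet Ω) (hS : MeasurableSet S) (hp : ∀ y ∈ Ω, 1 ≤ p y)
    {q A rp : ℝ} (hpq : ∀ y ∈ S ∩ Ω, p y ≤ q) (ha0 : ∀ y ∈ Ω, 0 ≤ a y) (haA : ∀ y ∈ Ω, a y ≤ A)
    (hr : ∀ y ∈ Ω, r y ≤ rp) (hrp : 0 ≤ rp) {v : EuclideanSpace ℝ (Fin n) → ℝ} {l T : ℝ}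
    (hl : 0 < l) (hv : ∀ y ∉ S, v y = 0) (hvT : ∀ y, |v y| / l ≤ T) (hT : 1 ≤ T) :
    ∫⁻ y in Ω, ENNReal.ofReal (Phi2 p r a y (|v y| / l)) ≤
      ENNReal.ofReal ((1 + A) * T ^ q * Real.log (Real.exp 1 + T) ^ rp) * volume (S ∩ Ω) := by
  set C := (1 + A) * T ^ q * Real.log (Real.exp 1 + T) ^ rp
  have hpt : ∀ y ∈ Ω, ENNReal.ofReal (Phi2 p r a y (|v y| / l)) ≤
      S.indicator (fun _ => ENNReal.ofReal C) y := by
    intro y hy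
    by_cases hyS : y ∈ S
    · rw [indicator_of_mem hyS]
      exact ENNReal.ofReal_le_ofReal (Phi2_le (hp y hy) (hpq y ⟨hyS, hy⟩) (ha0 y hy) (haA y hy)
        (hr y hy) hrp (by positivity) (hvT y) hT)
    · simp [indicator_of_notMem hyS, hv y hyS, Phi2_zero (hp y hy)]
  calc ∫⁻ y in Ω, ENNReal.ofReal (Phi2 p r a y (|v y| / l))
      ≤ ∫⁻ y in Ω, S.indicator (fun _ => ENNReal.ofReal C) y :=
        setLIntegral_mono_ae' hΩ (Filter.Eventually.of_forall hpt)
    _ = ENNReal.ofReal C * volume (S ∩ Ω) := by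
        rw [lintegral_indicator_const hS, Measure.restrict_apply hS]

lemma toReal_volume_rpow_inv_le (hΩ : MeasurableSet Ω) (hS : MeasurableSet S)
    (ha0 : ∀ y ∈ Ω, 0 ≤ a y) {s : ℝ} (hs0 : 0 < s) (hs : ∀ y ∈ S ∩ Ω, s ≤ pStar n p y)
    {u : EuclideanSpace ℝ (Fin n) → ℝ} (hu : ∀ y ∈ S, u y = 1)
    (hm : (volume (S ∩ Ω)).toReal ≤ 1) {l : ℝ} (hl : 0 < l)
    (hint : ∫⁻ y in Ω, ENNReal.ofReal (Psi p r a y (|u y| / l)) ≤ 1) :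
    (volume (S ∩ Ω)).toReal ^ s⁻¹ ≤ l := by
  rw [Real.rpow_inv_le_iff_of_pos ENNReal.toReal_nonneg hl.le hs0]
  rcases le_or_gt 1 l with hl1 | hl1
  · exact hm.trans (Real.one_le_rpow hl1 hs0.le)
  have hpt : ∀ y ∈ S ∩ Ω, ENNReal.ofReal ((1 / l) ^ s) ≤
      ENNReal.ofReal (Psi p r a y (|u y| / l)) := by
    rintro y ⟨hyS, hyΩ⟩
    rw [hu y hyS, abs_one]
    refine ENNReal.ofReal_le_ofReal ((Real.rpow_le_rpow_of_exponent_le ?_ (hs y ⟨hyS, hyΩ⟩)).trans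
      (rpow_pStar_le_Psi (ha0 y hyΩ) (by positivity)))
    rw [le_div_iff₀ hl]; linarith
  have hmeas : ENNReal.ofReal ((1 / l) ^ s) * volume (S ∩ Ω) ≤ 1 :=
    calc ENNReal.ofReal ((1 / l) ^ s) * volume (S ∩ Ω)
        = ∫⁻ _ in S ∩ Ω, ENNReal.ofReal ((1 / l) ^ s) := (setLIntegral_const _ _).symm
      _ ≤ ∫⁻ y in S ∩ Ω, ENNReal.ofReal (Psi p r a y (|u y| / l)) :=
        setLIntegral_mono_ae' (hS.inter hΩ) (Filter.Eventually.of_forall hpt)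
      _ ≤ ∫⁻ y in Ω, ENNReal.ofReal (Psi p r a y (|u y| / l)) :=
        lintegral_mono_set inter_subset_right
      _ ≤ 1 := hint
  have hreal := ENNReal.toReal_mono ENNReal.one_ne_top hmeas
  rw [ENNReal.toReal_mul, ENNReal.toReal_ofReal (by positivity), ENNReal.toReal_one,
    Real.div_rpow zero_le_one hl.le, Real.one_rpow, div_mul_eq_mul_div, one_mul,
    div_le_one (by positivity)] at hreal
  exact hreal

end Modular

section Embedding

variable {n : ℕ} {Ω : Set (EuclideanSpace ℝ (Fin n))} {p r a : EuclideanSpace ℝ (Fin n) → ℝ}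

/-- Test the embedding with `ballBump x ρ`: by `hmod` the Luxemburg norms of the bump and of its
gradient are at most `M / (ρ T)`, while its `Ψ`-norm is at least `|B_{ρ/2}(x) ∩ Ω|^{1/s}`. -/
theorem toReal_volume_half_ball_rpow_inv_le (hΩ : MeasurableSet Ω) (hp : ∀ y ∈ Ω, 1 ≤ p y)
    (ha0 : ∀ y ∈ Ω, 0 ≤ a y) {A rp : ℝ} (haA : ∀ y ∈ Ω, a y ≤ A) (hr : ∀ y ∈ Ω, r y ≤ rp)
    (hrp : 0 ≤ rp) {c₁ : ℝ} (hc₁ : 0 < c₁)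
    (hemb : ∀ u : EuclideanSpace ℝ (Fin n) → ℝ, ContDiff ℝ 1 u → HasCompactSupport u →
      luxNorm Ω (Psi p r a) u ≤ ENNReal.ofReal c₁ * (luxNorm Ω (Phi2 p r a) u +
        luxNorm Ω (Phi2 p r a) (fun x => ‖fderiv ℝ u x‖)))
    {M : ℝ} (hM : ∀ z, ‖fderiv ℝ (unitBump n) z‖ ≤ M) (hM1 : 1 ≤ M)
    {x : EuclideanSpace ℝ (Fin n)} {ρ q s T : ℝ} (hρ0 : 0 < ρ) (hρ1 : ρ ≤ 1)
    (hq : ∀ y ∈ ball x ρ ∩ Ω, p y ≤ q) (hs0 : 0 < s)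
    (hs : ∀ y ∈ ball x (ρ / 2) ∩ Ω, s ≤ pStar n p y) (hT : 1 ≤ T)
    (hmod : (1 + A) * T ^ q * Real.log (Real.exp 1 + T) ^ rp *
      (volume (ball x ρ ∩ Ω)).toReal ≤ 1)
    (hm' : (volume (ball x (ρ / 2) ∩ Ω)).toReal ≤ 1) :
    (volume (ball x (ρ / 2) ∩ Ω)).toReal ^ s⁻¹ ≤ 2 * c₁ * M / (ρ * T) := by
  set u := ballBump x ρ
  set l := M / (ρ * T)
  have hl : 0 < l := by positivity
  have hmodular : ∀ v : EuclideanSpace ℝ (Fin n) → ℝ, (∀ y ∉ ball x ρ, v y = 0) →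
      (∀ y, |v y| / l ≤ T) → ∫⁻ y in Ω, ENNReal.ofReal (Phi2 p r a y (|v y| / l)) ≤ 1 := by
    intro v hv hvT
    refine (lintegral_Phi2_le hΩ measurableSet_ball hp hq ha0 haA hr hrp hl hv hvT hT).trans ?_
    have hfin : volume (ball x ρ ∩ Ω) ≠ ⊤ := (measure_mono inter_subset_left).trans_lt
      measure_ball_lt_top |>.ne
    rw [← ENNReal.ofReal_toReal hfin, ← ENNReal.ofReal_mul' ENNReal.toReal_nonneg]
    exact ENNReal.ofReal_le_one.2 hmod
  have hTl : T = (M / ρ) / l := by simp only [l]; field_simp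
  have hu : luxNorm Ω (Phi2 p r a) u ≤ ENNReal.ofReal l :=
    luxNorm_le_ofReal hl <| hmodular u (fun y hy => ballBump_eq_zero hρ0 hy) fun y => by
      rw [hTl, abs_of_nonneg ballBump_nonneg]
      exact div_le_div_of_nonneg_right (ballBump_le_one.trans (by rw [le_div_iff₀ hρ0]; linarith))
        hl.le
  have hgrad : luxNorm Ω (Phi2 p r a) (fun y => ‖fderiv ℝ u y‖) ≤ ENNReal.ofReal l :=
    luxNorm_le_ofReal hl <| hmodular _ (fun y hy => by simp [u, fderiv_ballBump_eq_zero hρ0 hy])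
      fun y => by
        rw [hTl, abs_norm]
        exact div_le_div_of_nonneg_right (norm_fderiv_ballBump_le hρ0 hM) hl.le
  have hPsi : ENNReal.ofReal ((volume (ball x (ρ / 2) ∩ Ω)).toReal ^ s⁻¹) ≤
      luxNorm Ω (Psi p r a) u :=
    ofReal_le_luxNorm fun l hl hint => toReal_volume_rpow_inv_le hΩ measurableSet_ball ha0 hs0 hs
      (fun y hy => ballBump_eq_one hρ0 (ball_subset_closedBall hy)) hm' hl hint
  have hcomb := hPsi.trans <| (hemb u contDiff_ballBump (hasCompactSupport_ballBump hρ0)).trans <|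
    mul_le_mul_right (add_le_add hu hgrad) _
  rw [← ENNReal.ofReal_add hl.le hl.le, ← ENNReal.ofReal_mul hc₁.le,
    ENNReal.ofReal_le_ofReal_iff (by positivity)] at hcomb
  calc _ ≤ c₁ * (l + l) := hcomb
    _ = 2 * c₁ * M / (ρ * T) := by ring

end Embedding

section Exponents

/-- `pStar n p y` is definitionally `sobolevConj n (p y)`. -/
noncomputable def sobolevConj (d t : ℝ) : ℝ := (1 / t - 1 / d)⁻¹

variable {d t t' : ℝ}

lemma sobolevConj_eq (ht : 0 < t) (htd : t < d) : sobolevConj d t = d * t / (d - t) := by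
  have hd : 0 < d := ht.trans htd
  rw [sobolevConj, div_sub_div _ _ ht.ne' hd.ne', inv_div]
  ring

lemma sobolevConj_pos (ht : 0 < t) (htd : t < d) : 0 < sobolevConj d t := by
  rw [sobolevConj_eq ht htd]
  exact div_pos (mul_pos (ht.trans htd) ht) (by linarith)

lemma sobolevConj_mono (ht : 0 < t) (htt' : t ≤ t') (ht'd : t' < d) :
    sobolevConj d t ≤ sobolevConj d t' := by
  refine inv_anti₀ (sub_pos.2 ?_) (sub_le_sub_right (one_div_le_one_div_of_le ht htt') _)
  exact one_div_lt_one_div_of_lt (ht.trans_le htt') ht'd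

variable {p₀ pp ε : ℝ}

lemma sub_le_sobolevConj_mul (hp₀ : 1 ≤ p₀) (hp₀pp : p₀ ≤ pp) (hpp : pp < d) (hε0 : 0 ≤ ε)
    (hε : 4 * d ^ 2 * ε ≤ d - pp) :
    d - 2 * d ^ 2 * ε / (d - pp) ≤ sobolevConj d (p₀ - ε) * (d - (p₀ + ε)) / (p₀ + ε) := by
  have hd : 1 < d := by linarith
  have hε14 : ε < 1 / 4 := by nlinarith
  have ht : 0 < p₀ - ε := by linarith
  rw [sobolevConj_eq ht (by linarith)]
  have hdt : 0 < d - (p₀ - ε) := by linarith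
  have key : d * (p₀ - ε) / (d - (p₀ - ε)) * (d - (p₀ + ε)) / (p₀ + ε) =
      d - 2 * d ^ 2 * ε / ((d - (p₀ - ε)) * (p₀ + ε)) := by
    field_simp
    ring
  rw [key]
  gcongr
  nlinarith

lemma one_add_le_sobolevConj_div (hp₀ : 1 ≤ p₀) (hp₀pp : p₀ ≤ pp) (hpp : pp < d) (hε0 : 0 ≤ ε)
    (hε : 4 * d ^ 2 * ε ≤ d - pp) :
    1 + 1 / (2 * (d - 1)) ≤ sobolevConj d (p₀ - ε) / (p₀ + ε) := by
  have hd : 1 < d := by linarith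
  have hε' : 2 * d ^ 2 * ε / (d - pp) ≤ 1 / 2 := by
    rw [div_le_iff₀ (by linarith)]; linarith
  have hγ := sub_le_sobolevConj_mul hp₀ hp₀pp hpp hε0 hε
  have hq : d - (p₀ + ε) ≤ d - 1 := by linarith
  have hdq : 0 < d - (p₀ + ε) := by
    nlinarith [mul_le_mul_of_nonneg_right (by nlinarith : 1 ≤ d ^ 2) hε0]
  have hsplit : sobolevConj d (p₀ - ε) / (p₀ + ε) =
      sobolevConj d (p₀ - ε) * (d - (p₀ + ε)) / (p₀ + ε) / (d - (p₀ + ε)) := by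
    field_simp
  rw [hsplit, le_div_iff₀ hdq]
  calc (1 + 1 / (2 * (d - 1))) * (d - (p₀ + ε)) ≤ (1 + 1 / (2 * (d - 1))) * (d - 1) :=
        mul_le_mul_of_nonneg_left hq (by positivity)
    _ = d - 1 / 2 := by field_simp [(by linarith : d - 1 ≠ 0)]; ring
    _ ≤ _ := by linarith

end Exponents

section Arithmetic

lemma rpow_le_max_one_rpow {C s P : ℝ} (hC : 0 ≤ C) (hs : 0 ≤ s) (hsP : s ≤ P) :
    C ^ s ≤ max 1 C ^ P :=
  (Real.rpow_le_rpow hC (le_max_right 1 C) hs).trans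
    (Real.rpow_le_rpow_of_exponent_le (le_max_left 1 C) hsP)

lemma rpow_le_mul_exp {ρ γ d η : ℝ} (hρ0 : 0 < ρ) (hρ1 : ρ ≤ 1) (hγ : d - η ≤ γ) :
    ρ ^ γ ≤ ρ ^ d * Real.exp (η * Real.log (1 / ρ)) := by
  calc ρ ^ γ ≤ ρ ^ (d + -η) := Real.rpow_le_rpow_of_exponent_ge hρ0 hρ1 (by linarith)
    _ = ρ ^ d * Real.exp (η * Real.log (1 / ρ)) := by
      rw [Real.rpow_add hρ0, Real.rpow_def_of_pos hρ0 (-η), one_div, Real.log_inv]; ring_nf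

lemma le_mul_logDensity_of_rpow_inv_le {d α rp s q P η C ρ X m' : ℝ}
    (hρ0 : 0 < ρ) (hρ1 : ρ ≤ 1) (hL : 1 ≤ Real.log (1 / ρ)) (hX0 : 0 < X)
    (hX : X ≤ ρ ^ d * Real.log (1 / ρ) ^ (rp - α)) (hq : 0 < q) (hs : 0 < s) (hsP : s ≤ P)
    (hαβ : α + 2 ≤ (α - rp) * (s / q)) (hγ : d - η ≤ s * (d - q) / q) (hC : 0 ≤ C)
    (hm' : 0 ≤ m') (h : m' ^ s⁻¹ ≤ C / (ρ * X ^ (-q⁻¹))) :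
    m' ≤ max 1 C ^ P * Real.exp (η * Real.log (1 / ρ)) * Real.log (1 / ρ) ^ (-2 : ℝ) *
      logDensity d α ρ := by
  set L := Real.log (1 / ρ)
  have hL0 : 0 < L := by linarith
  rw [Real.rpow_inv_le_iff_of_pos hm' (by positivity) hs] at h
  have hsplit : (C / (ρ * X ^ (-q⁻¹))) ^ s = C ^ s * ρ ^ (-s) * X ^ (s / q) := by
    rw [Real.div_rpow hC (by positivity), Real.mul_rpow hρ0.le (by positivity),
      ← Real.rpow_mul hX0.le, Real.rpow_neg hρ0.le, show -q⁻¹ * s = -(s / q) by ring,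
      Real.rpow_neg hX0.le]
    field_simp
  have hρpow : ρ ^ (-s) * (ρ ^ d) ^ (s / q) ≤ ρ ^ d * Real.exp (η * L) := by
    rw [← Real.rpow_mul hρ0.le, ← Real.rpow_add hρ0]
    refine rpow_le_mul_exp hρ0 hρ1 ?_
    rwa [show -s + d * (s / q) = s * (d - q) / q by field_simp; ring]
  have hLpow : (L ^ (rp - α)) ^ (s / q) ≤ L ^ (-2 : ℝ) * L ^ (-α) := by
    rw [← Real.rpow_mul hL0.le, ← Real.rpow_add hL0]
    exact Real.rpow_le_rpow_of_exponent_le hL (by nlinarith)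
  calc m' ≤ C ^ s * ρ ^ (-s) * X ^ (s / q) := hsplit ▸ h
    _ ≤ max 1 C ^ P * ρ ^ (-s) * (ρ ^ d * L ^ (rp - α)) ^ (s / q) := by
      gcongr
      exact rpow_le_max_one_rpow hC hs.le hsP
    _ = max 1 C ^ P * (ρ ^ (-s) * (ρ ^ d) ^ (s / q)) * (L ^ (rp - α)) ^ (s / q) := by
      rw [Real.mul_rpow (by positivity) (by positivity)]; ring
    _ ≤ max 1 C ^ P * (ρ ^ d * Real.exp (η * L)) * (L ^ (-2 : ℝ) * L ^ (-α)) := by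
      gcongr
    _ = _ := by unfold logDensity; ring

lemma log_exp_one_add_le {k R T : ℝ} (hR : 2 ≤ R) (hT1 : 1 ≤ T) (hT : T ≤ R ^ k) :
    Real.log (Real.exp 1 + T) ≤ (k + 2) * Real.log R := by
  have he : Real.exp 1 < 3 := by have := Real.exp_one_lt_d9; norm_num at this; linarith
  rw [← Real.log_rpow (by linarith)]
  refine Real.log_le_log (by positivity) ?_
  rw [Real.rpow_add (by linarith), Real.rpow_two]
  nlinarith [mul_le_mul_of_nonneg_left (show 4 ≤ R ^ 2 by nlinarith) (by positivity : 0 ≤ R ^ k)]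

lemma modular_condition_of_rpow_lt {k ρ m A rp q D T : ℝ} (hk : 0 ≤ k) (hρ0 : 0 < ρ)
    (hρ : ρ ≤ 1 / 2)
    (hL : 1 ≤ Real.log (1 / ρ)) (hA : 0 ≤ A) (hrp : 0 ≤ rp) (hq : 1 ≤ q)
    (hD : (1 + A) * (k + 2) ^ rp ≤ D) (hmρ : ρ ^ k < m)
    (hX : D * m * Real.log (1 / ρ) ^ rp ≤ 1) (hT : T = (D * m * Real.log (1 / ρ) ^ rp) ^ (-q⁻¹)) :
    1 ≤ T ∧ (1 + A) * T ^ q * Real.log (Real.exp 1 + T) ^ rp * m ≤ 1 := by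
  set L := Real.log (1 / ρ)
  set X := D * m * L ^ rp
  have hD1 : 1 ≤ D := le_trans (one_le_mul_of_one_le_of_one_le (by linarith)
    (Real.one_le_rpow (by linarith) hrp)) hD
  have hm0 : 0 < m := (Real.rpow_pos_of_pos hρ0 k).trans hmρ
  have hLrp : 1 ≤ L ^ rp := Real.one_le_rpow hL hrp
  have hmX : m ≤ X := by
    calc m = 1 * m * 1 := by ring
      _ ≤ D * m * L ^ rp := by gcongr
  have hX0 : 0 < X := hm0.trans_le hmX
  have hT1 : 1 ≤ T := hT ▸ Real.one_le_rpow_of_pos_of_le_one_of_nonpos hX0 hX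
    (by simp only [Left.neg_nonpos_iff, inv_nonneg]; linarith)
  have hTk : T ≤ (1 / ρ) ^ k := by
    calc T ≤ X ^ (-1 : ℝ) := hT ▸ Real.rpow_le_rpow_of_exponent_ge hX0 hX
          (neg_le_neg (inv_le_one_of_one_le₀ hq))
      _ ≤ (ρ ^ k)⁻¹ := by
        rw [Real.rpow_neg_one]; exact inv_anti₀ (by positivity) (hmρ.le.trans hmX)
      _ = (1 / ρ) ^ k := by rw [one_div, Real.inv_rpow hρ0.le]
  have hlog := log_exp_one_add_le (by rw [le_div_iff₀ hρ0]; linarith) hT1 hTk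
  have hTq : T ^ q = X⁻¹ := by
    rw [hT, ← Real.rpow_mul hX0.le, neg_mul, inv_mul_cancel₀ (by linarith), Real.rpow_neg_one]
  refine ⟨hT1, ?_⟩
  calc (1 + A) * T ^ q * Real.log (Real.exp 1 + T) ^ rp * m
      ≤ (1 + A) * X⁻¹ * ((k + 2) * L) ^ rp * m := by
        rw [hTq]
        gcongr
        exact (one_le_log_exp_one_add (by linarith)).trans' zero_le_one
    _ = (1 + A) * (k + 2) ^ rp / D := by
        rw [Real.mul_rpow (by linarith) (by linarith)]
        simp only [X]
        field_simp
    _ ≤ 1 := by rw [div_le_one (by linarith)]; exact hD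

lemma eventually_atTop_small_terms {α C K b δ : ℝ} (hb : 0 < b) (hδ : 0 < δ) :
    ∀ᶠ L in atTop, 1 ≤ L ∧ C / L ≤ b ∧ L ^ α * Real.exp (-1 * L) ≤ δ ∧ K * L ^ (-2 : ℝ) ≤ δ :=
  (eventually_ge_atTop 1).and <|
    ((tendsto_const_nhds.div_atTop tendsto_id).eventually_le_const hb).and <|
    ((tendsto_rpow_mul_exp_neg_mul_atTop_nhds_zero α 1 one_pos).eventually_le_const hδ).and <|
    ((tendsto_rpow_neg_atTop two_pos).const_mul K).eventually_le_const (by simpa using hδ)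

end Arithmetic

section Density

variable {n : ℕ} {Ω : Set (EuclideanSpace ℝ (Fin n))} {p r a : EuclideanSpace ℝ (Fin n) → ℝ}

lemma toReal_volume_ball_inter_mono (x : EuclideanSpace ℝ (Fin n)) {ρ ρ' : ℝ} (h : ρ ≤ ρ') :
    (volume (ball x ρ ∩ Ω)).toReal ≤ (volume (ball x ρ' ∩ Ω)).toReal :=
  ENNReal.toReal_mono ((measure_mono inter_subset_left).trans_lt measure_ball_lt_top).ne
    (measure_mono (inter_subset_inter_left _ (ball_subset_ball h)))

/-- On `B_ρ(x)` the exponent `p` stays within `ε = Clog / log (1/ρ)` of `p x`, so the embedding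
is used with the frozen exponents `q = p x + ε` for `Φ` and `s = (p x - ε)*` for `Ψ`. -/
theorem toReal_volume_half_ball_le (hΩ : MeasurableSet Ω) (hp : ∀ y ∈ Ω, 1 ≤ p y) {pp : ℝ}
    (hpp : ∀ y ∈ Ω, p y ≤ pp) (hppn : pp < n) {Clog : ℝ} (hClog : 0 ≤ Clog)
    (hpLH : IsLogHolderOn p Ω Clog) (ha0 : ∀ y ∈ Ω, 0 ≤ a y) {A rp : ℝ} (hA : 0 ≤ A)
    (haA : ∀ y ∈ Ω, a y ≤ A) (hr : ∀ y ∈ Ω, r y ≤ rp) (hrp : 0 ≤ rp) {c₁ : ℝ} (hc₁ : 0 < c₁)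
    (hemb : ∀ u : EuclideanSpace ℝ (Fin n) → ℝ, ContDiff ℝ 1 u → HasCompactSupport u →
      luxNorm Ω (Psi p r a) u ≤ ENNReal.ofReal c₁ * (luxNorm Ω (Phi2 p r a) u +
        luxNorm Ω (Phi2 p r a) (fun x => ‖fderiv ℝ u x‖)))
    {M : ℝ} (hM : ∀ z, ‖fderiv ℝ (unitBump n) z‖ ≤ M) (hM1 : 1 ≤ M) {α D K : ℝ}
    (hαrp : rp ≤ α) (hα : α + 2 ≤ (α - rp) * (1 + 1 / (2 * (n - 1))))
    (hD : (1 + A) * (n + 3) ^ rp ≤ D)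
    (hK : max 1 (2 * c₁ * M) ^ sobolevConj n pp * Real.exp (2 * n ^ 2 * Clog / (n - pp)) ≤ K)
    {x : EuclideanSpace ℝ (Fin n)} (hx : x ∈ Ω) {ρ : ℝ} (hρ0 : 0 < ρ) (hρ : ρ ≤ 1 / 2)
    (hL : 1 ≤ Real.log (1 / ρ)) (hε : 4 * n ^ 2 * Clog / Real.log (1 / ρ) ≤ n - pp)
    (hm : (volume (ball x ρ ∩ Ω)).toReal ≤ D⁻¹ * logDensity n α ρ)
    (hmρ : ρ ^ ((n : ℝ) + 1) < (volume (ball x ρ ∩ Ω)).toReal) :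
    (volume (ball x (ρ / 2) ∩ Ω)).toReal ≤
      K * Real.log (1 / ρ) ^ (-2 : ℝ) * logDensity n α ρ := by
  set L := Real.log (1 / ρ)
  set m := (volume (ball x ρ ∩ Ω)).toReal
  set ε := Clog / L
  have hL0 : 0 < L := by linarith
  have hε0 : 0 ≤ ε := div_nonneg hClog hL0.le
  have hεn : 4 * n ^ 2 * ε ≤ n - pp := by rwa [← mul_div_assoc]
  have hp₀ : 1 ≤ p x := hp x hx
  have hp₀pp : p x ≤ pp := hpp x hx
  have hε1 : ε < 1 := by nlinarith
  have hosc : ∀ y ∈ ball x ρ ∩ Ω, |p y - p x| ≤ ε := fun y hy =>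
    hpLH.abs_sub_le_div_log hClog hy.2 hx hρ0 (by linarith) (mem_ball.1 hy.1).le
  have hq : ∀ y ∈ ball x ρ ∩ Ω, p y ≤ p x + ε := fun y hy => by
    linarith [(abs_le.1 (hosc y hy)).2]
  have hs : ∀ y ∈ ball x (ρ / 2) ∩ Ω, sobolevConj n (p x - ε) ≤ pStar n p y := fun y hy => by
    have := (abs_le.1 (hosc y ⟨ball_subset_ball (by linarith) hy.1, hy.2⟩)).1
    exact sobolevConj_mono (by linarith) (by linarith) ((hpp y hy.2).trans_lt hppn)
  have hs0 : 0 < sobolevConj n (p x - ε) := sobolevConj_pos (by linarith) (by linarith)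
  have hD1 : 1 ≤ D := hD.trans' (one_le_mul_of_one_le_of_one_le (by linarith)
    (Real.one_le_rpow (by linarith) hrp))
  have hX := mul_mul_rpow_le_of_le_logDensity (rp := rp) (by linarith) hL0 hm
  have hX1 : D * m * L ^ rp ≤ 1 := hX.trans (mul_le_one₀ (Real.rpow_le_one hρ0.le (by linarith)
    (by positivity)) (by positivity) (Real.rpow_le_one_of_one_le_of_nonpos hL (by linarith)))
  obtain ⟨hT1, hmod⟩ := modular_condition_of_rpow_lt (k := (n : ℝ) + 1) (q := p x + ε)
    (by positivity) hρ0 hρ hL hA hrp (by linarith) (by convert hD using 3; ring) hmρ hX1 rfl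
  have hm1 : m ≤ 1 := hm.trans (mul_le_one₀ (inv_le_one_of_one_le₀ hD1) (logDensity_nonneg hρ0
    (by linarith)) (logDensity_le_one (by positivity) (by linarith) hρ0 (by linarith) hL))
  have hsplit := toReal_volume_half_ball_rpow_inv_le hΩ hp ha0 haA hr hrp hc₁ hemb hM hM1 hρ0
    (by linarith) hq hs0 hs hT1 hmod ((toReal_volume_ball_inter_mono x (by linarith)).trans hm1)
  have hαβ : α + 2 ≤ (α - rp) * (sobolevConj n (p x - ε) / (p x + ε)) :=
    hα.trans (mul_le_mul_of_nonneg_left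
      (one_add_le_sobolevConj_div hp₀ hp₀pp hppn hε0 hεn) (by linarith))
  refine (le_mul_logDensity_of_rpow_inv_le hρ0 (by linarith) hL
    (mul_pos (mul_pos (by linarith) ((Real.rpow_pos_of_pos hρ0 _).trans hmρ))
      (Real.rpow_pos_of_pos hL0 _)) hX
    (by linarith) hs0 (sobolevConj_mono (by linarith) (by linarith) hppn) hαβ
    (sub_le_sobolevConj_mul hp₀ hp₀pp hppn hε0 hεn) (by positivity) ENNReal.toReal_nonneg
    hsplit).trans ?_
  rw [show 2 * (n : ℝ) ^ 2 * ε / (n - pp) * L = 2 * n ^ 2 * Clog / (n - pp) by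
    simp only [ε]; field_simp]
  gcongr
  exact logDensity_nonneg hρ0 (by linarith)

/-- If `|B_ρ(x) ∩ Ω| ≤ ρ^{n+1}` the decay is immediate, otherwise `toReal_volume_half_ball_le`
applies; for small `ρ` either gain beats the factor `κ = 2^{-(n+α)}` lost from `ρ` to `ρ/2`. -/
theorem exists_halving_step (hn : 2 ≤ n) (hΩ : MeasurableSet Ω) (hp : ∀ y ∈ Ω, 1 ≤ p y)
    {pp : ℝ} (hpp : ∀ y ∈ Ω, p y ≤ pp) (hppn : pp < n) {Clog : ℝ} (hClog : 0 ≤ Clog)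
    (hpLH : IsLogHolderOn p Ω Clog) (ha0 : ∀ y ∈ Ω, 0 ≤ a y) {A rp : ℝ} (hA : 0 ≤ A)
    (haA : ∀ y ∈ Ω, a y ≤ A) (hr : ∀ y ∈ Ω, r y ≤ rp) (hrp : 0 ≤ rp) {c₁ : ℝ} (hc₁ : 0 < c₁)
    (hemb : ∀ u : EuclideanSpace ℝ (Fin n) → ℝ, ContDiff ℝ 1 u → HasCompactSupport u →
      luxNorm Ω (Psi p r a) u ≤ ENNReal.ofReal c₁ * (luxNorm Ω (Phi2 p r a) u +
        luxNorm Ω (Phi2 p r a) (fun x => ‖fderiv ℝ u x‖))) :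
    ∃ α > 0, ∃ c > 0, ∃ ρs > 0, ρs ≤ 1 / 2 ∧ ∀ x ∈ Ω, ∀ ρ, 0 < ρ → ρ ≤ ρs →
      volume (ball x ρ ∩ Ω) ≤ ENNReal.ofReal (c * logDensity n α ρ) →
      volume (ball x (ρ / 2) ∩ Ω) ≤ ENNReal.ofReal (c * logDensity n α (ρ / 2)) := by
  obtain ⟨M, hM1, hM⟩ := exists_norm_fderiv_unitBump_le n
  have hn1 : (1 : ℝ) < n := by exact_mod_cast hn
  set α := rp + 2 * ((n : ℝ) - 1) * (rp + 2)
  set D := (1 + A) * ((n : ℝ) + 3) ^ rp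
  set K := max 1 (2 * c₁ * M) ^ sobolevConj n pp * Real.exp (2 * n ^ 2 * Clog / (n - pp))
  set κ := (2 : ℝ) ^ (-α) * (1 / 2) ^ (n : ℝ)
  have hα0 : 0 < α := by positivity
  have hα : (α - rp) * (1 + 1 / (2 * (n - 1))) = α + 2 := by
    simp only [α]; field_simp [(by linarith : (n : ℝ) - 1 ≠ 0)]; ring
  have hD : 0 < D := by positivity
  obtain ⟨L₀, hL₀⟩ := eventually_atTop.1 <| eventually_atTop_small_terms (α := α)
    (C := 4 * n ^ 2 * Clog) (K := K) (sub_pos.2 hppn) (by positivity : 0 < κ * D⁻¹)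
  refine ⟨α, hα0, D⁻¹, by positivity, min (1 / 2) (Real.exp (-L₀)), by positivity,
    min_le_left _ _, fun x hx ρ hρ0 hρ hm => ?_⟩
  have hρ2 : ρ ≤ 1 / 2 := hρ.trans (min_le_left _ _)
  obtain ⟨hL1, hε, hexp, hK⟩ := hL₀ (Real.log (1 / ρ)) <| by
    rw [one_div, Real.log_inv, le_neg, ← Real.log_exp (-L₀)]
    exact Real.log_le_log hρ0 (hρ.trans (min_le_right _ _))
  set m := (volume (ball x ρ ∩ Ω)).toReal
  have hg := logDensity_nonneg (d := n) (α := α) hρ0 (by linarith)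
  have hm' : (volume (ball x (ρ / 2) ∩ Ω)).toReal ≤ κ * D⁻¹ * logDensity n α ρ := by
    rcases lt_or_ge (ρ ^ ((n : ℝ) + 1)) m with hbig | hsmall
    · exact (toReal_volume_half_ball_le hΩ hp hpp hppn hClog hpLH ha0 hA haA hr hrp hc₁ hemb hM
        hM1 (le_add_of_nonneg_right (by positivity)) hα.ge le_rfl le_rfl hx hρ0 hρ2 hL1 hε
        (ENNReal.toReal_le_of_le_ofReal (by positivity) hm) hbig).trans (by gcongr)
    · calc (volume (ball x (ρ / 2) ∩ Ω)).toReal ≤ m :=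
            toReal_volume_ball_inter_mono x (by linarith)
        _ ≤ ρ ^ ((n : ℝ) + 1) := hsmall
        _ ≤ κ * D⁻¹ * logDensity n α ρ := by
          rw [rpow_add_one_eq_mul_logDensity hρ0 (by linarith)]; gcongr
  rw [← ENNReal.ofReal_toReal ((measure_mono inter_subset_left).trans_lt measure_ball_lt_top).ne]
  refine ENNReal.ofReal_le_ofReal (hm'.trans ?_)
  calc κ * D⁻¹ * logDensity n α ρ = D⁻¹ * (κ * logDensity n α ρ) := by ring
    _ ≤ D⁻¹ * logDensity n α (ρ / 2) := by
      gcongr; exact rpow_mul_logDensity_le_half hα0.le hρ0 hρ2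

end Density

theorem ofReal_mul_logDensity_le_volume {n : ℕ} (hn : 0 < n) {Ω : Set (EuclideanSpace ℝ (Fin n))}
    (hΩ : IsOpen Ω) {c α ρs : ℝ} (hα : 0 < α)
    (hstep : ∀ x ∈ Ω, ∀ ρ, 0 < ρ → ρ ≤ ρs →
      volume (ball x ρ ∩ Ω) ≤ ENNReal.ofReal (c * logDensity n α ρ) →
      volume (ball x (ρ / 2) ∩ Ω) ≤ ENNReal.ofReal (c * logDensity n α (ρ / 2)))
    {x : EuclideanSpace ℝ (Fin n)} (hx : x ∈ Ω) {ρ : ℝ} (hρ0 : 0 < ρ) (hρ : ρ ≤ ρs) :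
    ENNReal.ofReal (c * logDensity n α ρ) ≤ volume (ball x ρ ∩ Ω) := by
  by_contra! hlt
  have hall : ∀ k : ℕ, volume (ball x (ρ / 2 ^ k) ∩ Ω) ≤
      ENNReal.ofReal (c * logDensity n α (ρ / 2 ^ k)) := by
    intro k
    induction k with
    | zero => simpa using hlt.le
    | succ k ih =>
      rw [pow_succ, ← div_div]
      exact hstep x hx _ (by positivity)
        ((div_le_self hρ0.le (one_le_pow₀ one_le_two)).trans hρ) ih
  obtain ⟨δ, hδ0, hδ⟩ := Metric.isOpen_iff.1 hΩ x hx
  have hfinrank : Module.finrank ℝ (EuclideanSpace ℝ (Fin n)) = n := finrank_euclideanSpace_fin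
  have : Nontrivial (EuclideanSpace ℝ (Fin n)) :=
    Module.nontrivial_of_finrank_pos (hfinrank ▸ hn)
  set v := (volume (ball (0 : EuclideanSpace ℝ (Fin n)) 1)).toReal
  have hv : 0 < v := ENNReal.toReal_pos (measure_ball_pos volume 0 one_pos).ne'
    measure_ball_lt_top.ne
  have hlog : Tendsto (fun t : ℝ => Real.log (1 / t)) (𝓝[>] 0) atTop := by
    simpa [one_div, Real.log_inv] using Real.tendsto_log_nhdsGT_zero
  have hsmall : ∀ᶠ t in 𝓝[>] (0 : ℝ), t < δ ∧ c * Real.log (1 / t) ^ (-α) < v :=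
    ((eventually_lt_nhds hδ0).filter_mono nhdsWithin_le_nhds).and
      ((((tendsto_rpow_neg_atTop hα).comp hlog).const_mul c).eventually
        (gt_mem_nhds (by simpa using hv)))
  have hρk : Tendsto (fun k : ℕ => ρ / 2 ^ k) atTop (𝓝[>] 0) :=
    tendsto_nhdsWithin_iff.2 ⟨tendsto_const_nhds.div_atTop
      (tendsto_pow_atTop_atTop_of_one_lt one_lt_two),
      Eventually.of_forall fun k => mem_Ioi.2 (by positivity)⟩
  obtain ⟨k, hkδ, hkv⟩ := (hρk.eventually hsmall).exists
  set t := ρ / 2 ^ k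
  have ht : 0 < t := by positivity
  have hball : ball x t ∩ Ω = ball x t := inter_eq_left.2 ((ball_subset_ball hkδ.le).trans hδ)
  have hlt' : ENNReal.ofReal (c * logDensity n α t) <
      ENNReal.ofReal (t ^ n) * volume (ball (0 : EuclideanSpace ℝ (Fin n)) 1) := by
    rw [← ENNReal.ofReal_toReal (measure_ball_lt_top (x := (0 : EuclideanSpace ℝ (Fin n)))).ne,
      ← ENNReal.ofReal_mul (by positivity), ENNReal.ofReal_lt_ofReal_iff (by positivity),
      logDensity, Real.rpow_natCast]
    calc c * (t ^ n * Real.log (1 / t) ^ (-α)) = t ^ n * (c * Real.log (1 / t) ^ (-α)) := by ring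
      _ < t ^ n * v := by gcongr
  have hvol := hall k
  rw [hball, Measure.addHaar_ball volume x ht.le, hfinrank] at hvol
  exact hlt'.not_ge hvol

theorem exists_ofReal_mul_logDensity_le_measure {X : Type*} [MetricSpace X] [MeasurableSpace X]
    (μ : Measure X) {Ω : Set X} {d α c ρs : ℝ} (hα : 0 ≤ α) (hc : 0 < c) (hρs0 : 0 < ρs)
    (hρs : ρs ≤ 1 / 2)
    (h : ∀ y ∈ Ω, ∀ ρ, 0 < ρ → ρ ≤ ρs → ENNReal.ofReal (c * logDensity d α ρ) ≤ μ (ball y ρ ∩ Ω)) :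
    ∃ c' > 0, ∀ x ∈ closure Ω, ∀ R, 0 < R → R ≤ 1 / 2 →
      ENNReal.ofReal (c' * logDensity d α R) ≤ μ (ball x R ∩ Ω) := by
  set K := 1 + Real.log (1 / ρs) / Real.log 2
  have hK : 0 < K := by
    have := Real.log_nonneg (show 1 ≤ 1 / ρs by rw [le_div_iff₀ hρs0]; linarith)
    have := Real.log_pos one_lt_two
    positivity
  refine ⟨c * (K ^ (-α) * ρs ^ d), by positivity, fun x hx R hR0 hR => ?_⟩
  obtain ⟨y, hy, hxy⟩ := Metric.mem_closure_iff.1 hx (R / 2) (by positivity)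
  have hsub : ball y (ρs * R) ⊆ ball x R := fun z hz => by
    rw [mem_ball] at hz ⊢
    linarith [dist_triangle z y x, dist_comm x y, mul_le_mul_of_nonneg_right hρs hR0.le]
  calc ENNReal.ofReal (c * (K ^ (-α) * ρs ^ d) * logDensity d α R)
      ≤ ENNReal.ofReal (c * logDensity d α (ρs * R)) := by
        rw [mul_assoc c]
        gcongr
        exact rpow_mul_logDensity_le hα hρs0 (by linarith) hR0 hR le_rfl
    _ ≤ μ (ball y (ρs * R) ∩ Ω) :=
        h y hy _ (by positivity) (mul_le_of_le_one_right hρs0.le (by linarith))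
    _ ≤ μ (ball x R ∩ Ω) := measure_mono (inter_subset_inter_left _ hsub)

theorem stmt_18_general {n : ℕ} (hn : 2 ≤ n)
    (Ω : Set (EuclideanSpace ℝ (Fin n))) (hΩo : IsOpen Ω)
    (p r a : EuclideanSpace ℝ (Fin n) → ℝ)
    (hp1 : ∀ x ∈ closure Ω, 1 ≤ p x)
    (Clog : ℝ) (hClog : 0 < Clog)
    (hpLH : ∀ x ∈ closure Ω, ∀ y ∈ closure Ω, x ≠ y →
      |p x - p y| ≤ Clog / Real.log (Real.exp 1 + 1 / dist x y))
    (hpn : sSup (p '' Ω) < n)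
    (hrB : BddAbove (r '' Ω))
    (ha0 : ∀ x ∈ Ω, 0 ≤ a x) (haB : BddAbove (a '' Ω))
    (c₁ : ℝ) (hc₁ : 0 < c₁)
    (hemb : ∀ u : EuclideanSpace ℝ (Fin n) → ℝ,
      ContDiff ℝ 1 u → HasCompactSupport u →
      luxNorm Ω (Psi p r a) u ≤
        ENNReal.ofReal c₁ * (luxNorm Ω (Phi2 p r a) u +
          luxNorm Ω (Phi2 p r a) (fun x => ‖fderiv ℝ u x‖)))
    (hr : ∃ x ∈ Ω, 0 ≤ r x) :
    ∃ c : ℝ, 0 < c ∧ ∃ α : ℝ, 0 < α ∧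
      ∀ x ∈ closure Ω, ∀ R : ℝ, R ∈ Set.Ioc (0:ℝ) (1/2) →
        ENNReal.ofReal (c * R ^ (n : ℝ) * (Real.log (1 / R)) ^ (-α)) ≤
          volume (Metric.ball x R ∩ Ω) := by
  obtain ⟨x₀, hx₀, hrx₀⟩ := hr
  have hpLHΩ : IsLogHolderOn p Ω Clog := IsLogHolderOn.mono hpLH subset_closure
  have hp : ∀ y ∈ Ω, 1 ≤ p y := fun y hy => hp1 y (subset_closure hy)
  have hpp : ∀ y ∈ Ω, p y ≤ sSup (p '' Ω) := fun y hy =>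
    le_csSup (hpLHΩ.bddAbove_image hClog.le hx₀) (mem_image_of_mem p hy)
  have hra : ∀ y ∈ Ω, r y ≤ sSup (r '' Ω) := fun y hy => le_csSup hrB (mem_image_of_mem r hy)
  have haA : ∀ y ∈ Ω, a y ≤ sSup (a '' Ω) := fun y hy => le_csSup haB (mem_image_of_mem a hy)
  obtain ⟨α, hα, c, hc, ρs, hρs0, hρs, hstep⟩ := exists_halving_step hn hΩo.measurableSet hp hpp
    hpn hClog.le hpLHΩ ha0 ((ha0 x₀ hx₀).trans (haA x₀ hx₀)) haA hra (hrx₀.trans (hra x₀ hx₀))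
    hc₁ hemb
  obtain ⟨c', hc', hdens⟩ := exists_ofReal_mul_logDensity_le_measure volume hα.le hc hρs0 hρs
    fun y hy ρ hρ0 hρ => ofReal_mul_logDensity_le_volume (by omega) hΩo hα hstep hy hρ0 hρ
  exact ⟨c', hc', α, hα, fun x hx R hR => by
    simpa only [logDensity, mul_assoc] using hdens x hx R hR.1 hR.2⟩

/-- under the embedding hypothesis, if `r(x) ≥ 0` for at least one
`x ∈ Ω`, then `Ω` satisfies the log-measure density condition: there are `c, α > 0`
with `|B_R(x) ∩ Ω| ≥ c Rⁿ (log(1/R))^{−α}` for all `x ∈ closure Ω`, `R ∈ (0,1/2]`. -/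
theorem stmt_18 {n : ℕ} (hn : 2 ≤ n)
    (Ω : Set (EuclideanSpace ℝ (Fin n))) (hΩo : IsOpen Ω)
    (p r a : EuclideanSpace ℝ (Fin n) → ℝ)
    (hp1 : ∀ x ∈ closure Ω, 1 ≤ p x)
    (Clog : ℝ) (hClog : 0 < Clog)
    (hpLH : ∀ x ∈ closure Ω, ∀ y ∈ closure Ω, x ≠ y →
      |p x - p y| ≤ Clog / Real.log (Real.exp 1 + 1 / dist x y))
    (hpn : sSup (p '' Ω) < n)
    (hrB : BddAbove (r '' Ω)) (hrb : BddBelow (r '' Ω))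
    (ha0 : ∀ x ∈ Ω, 0 ≤ a x) (haB : BddAbove (a '' Ω))
    (c₁ : ℝ) (hc₁ : 0 < c₁)
    (hemb : ∀ u : EuclideanSpace ℝ (Fin n) → ℝ,
      ContDiff ℝ 1 u → HasCompactSupport u →
      luxNorm Ω (Psi p r a) u ≤
        ENNReal.ofReal c₁ * (luxNorm Ω (Phi2 p r a) u +
          luxNorm Ω (Phi2 p r a) (fun x => ‖fderiv ℝ u x‖)))
    (hr : ∃ x ∈ Ω, 0 ≤ r x) :
    ∃ c : ℝ, 0 < c ∧ ∃ α : ℝ, 0 < α ∧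
      ∀ x ∈ closure Ω, ∀ R : ℝ, R ∈ Set.Ioc (0:ℝ) (1/2) →
        ENNReal.ofReal (c * R ^ (n : ℝ) * (Real.log (1 / R)) ^ (-α)) ≤
          volume (Metric.ball x R ∩ Ω) :=
  stmt_18_general hn Ω hΩo p r a hp1 Clog hClog hpLH hpn hrB ha0 haB c₁ hc₁ hemb hr
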